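/- (Poisson equation with divergence-form source on the infinite cluster.) Let d ≥ 2, λ ∈ (0,1], and let a ∈ ({0} ∪ [λ,1])^{B_d} be an environment whose graph of open edges has a unique infinite cluster C_∞. Set E^a_d := {(x,y) ∈ E_d : x,y ∈ C_∞ and a({x,y}) ≠ 0}. Let ξ : E_d → ℝ be antisymmetric with ξ(x,y) = 0 unless both x,y ∈ C_∞ and a({x,y}) ≠ 0, and suppose ⟨ξ, ξ⟩_{C_∞} < ∞. Then: (a) there exists w : C_∞ → ℝ with ⟨∇w, ∇w⟩_{C_∞} < ∞ such that for every h : C_∞ → ℝ with ⟨∇h, ∇h⟩_{C_∞} < ∞, the sums Σ_{(x,y) ∈ E^a_d} ∇w(x,y) a({x,y}) ∇h(x,y) and Σ_{(x,y) ∈ E^a_d} ξ(x,y) ∇h(x,y) converge absolutely and are equal; (b) if w and w' both have this property (with finite Dirichlet energy), then w − w' is constant on C_∞; (c) if (G^e)_{e ∈ E^a_d} is any family of Green's functions as in the Green's function proposition (bounded gradients, finite energy, weak equation ⟨∇G^e, a∇h⟩_{C_∞} = ∇h(e) for all finite-energy h), then for every e' ∈ E^a_d the series Σ_{e ∈ E^a_d}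 ξ(e) ∇G^e(e') converges absolutely and equals ∇w(e'). -/

import Mathlib

open MeasureTheory Filter
open scoped ENNReal Classical

noncomputable section

namespace Perco

/-- Vertices of the lattice `ℤ^d`. -/
abbrev V (d : ℕ) := Fin d → ℤ

/-- Nearest-neighbour adjacency (`ℓ¹`-distance one). -/
def adj {d : ℕ} (x y : V d) : Prop := (∑ i, |x i - y i|) = 1

/-- A bond is an unordered pair of adjacent vertices. -/
def IsBond {d : ℕ} (e : Sym2 (V d)) : Prop := ∃ x y : V d, adj x y ∧ e = s(x, y)

/-- The set of bonds of `ℤ^d`. -/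
abbrev Bond (d : ℕ) := {e : Sym2 (V d) // IsBond e}

/-- An environment assigns a conductance to every bond. -/
abbrev Env (d : ℕ) := Bond d → ℝ

/-- The conductance of the bond `{x, y}` (zero if `x`, `y` are not adjacent). -/
def aOf {d : ℕ} (a : Env d) (x y : V d) : ℝ :=
  if h : adj x y then a ⟨s(x, y), x, y, h, rfl⟩ else 0

/-- The (oriented) edge `(x, y)` is open. -/
def opn {d : ℕ} (a : Env d) (x y : V d) : Prop := adj x y ∧ aOf a x y ≠ 0

/-- Connectivity through open edges. -/
def conn {d : ℕ} (a : Env d) : V d → V d → Prop := Relation.ReflTransGen (opn a)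

/-- `C_∞(a)`: the union of all infinite clusters of the environment `a`. -/
def Cinfty {d : ℕ} (a : Env d) : Set (V d) := {x | {y | conn a x y}.Infinite}

/-- The graph of open edges has a (unique) infinite cluster. -/
def HasUniqueInfiniteCluster {d : ℕ} (a : Env d) : Prop :=
  (Cinfty a).Nonempty ∧ ∀ x ∈ Cinfty a, ∀ y ∈ Cinfty a, conn a x y

/-- The environment takes values in `{0} ∪ [lam, 1]`. -/
def EnvBounds {d : ℕ} (lam : ℝ) (a : Env d) : Prop :=
  ∀ e : Bond d, a e = 0 ∨ a e ∈ Set.Icc lam 1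

/-- The discrete gradient of a function defined on the cluster `C`:
`∇u(x,y) = u x - u y` if `x, y ∈ C` and the edge `{x,y}` is open, and `0` otherwise. -/
def grad {d : ℕ} (a : Env d) (C : Set (V d)) (u : V d → ℝ) (x y : V d) : ℝ :=
  if x ∈ C ∧ y ∈ C ∧ opn a x y then u x - u y else 0

/-- `|F|(x)² = (1/2) ∑_y F(x,y)²` for a vector field `F`. -/
def sqNorm {d : ℕ} (F : V d → V d → ℝ) (x : V d) : ℝ := (1 / 2) * ∑' y, (F x y) ^ 2

/-- `u` is `a`-harmonic at the point `x`. -/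
def HarmonicAt {d : ℕ} (a : Env d) (u : V d → ℝ) (x : V d) : Prop :=
  ∑' y, aOf a x y * (u x - u y) = 0

/-- `u` is `a`-harmonic on the set `C`. -/
def HarmonicOn {d : ℕ} (a : Env d) (C : Set (V d)) (u : V d → ℝ) : Prop :=
  ∀ x ∈ C, HarmonicAt a u x

/-- The closed `ℓ∞` ball of radius `R` in `ℤ^d`. -/
def ballZ (d : ℕ) (R : ℝ) : Set (V d) := {x | ∀ i, (|x i| : ℝ) ≤ R}

/-- The `ℓ∞` distance of two lattice points, as a real number. -/
def distZ {d : ℕ} (x y : V d) : ℝ :=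
  (((Finset.univ.sup fun i => (x i - y i).natAbs) : ℕ) : ℝ)

/-- Embedding of `ℤ^d` into `ℝ^d`. -/
def toR {d : ℕ} (x : V d) : Fin d → ℝ := fun i => (x i : ℝ)

/-- Sum of `f` over the (typically finite) set `S ⊆ ℤ^d`. -/
def setSum {d : ℕ} (S : Set (V d)) (f : V d → ℝ) : ℝ := ∑' x : S, f x.1

/-- Average of `f` over the set `S ⊆ ℤ^d` (zero if `S` is empty or infinite). -/
def setAvg {d : ℕ} (S : Set (V d)) (f : V d → ℝ) : ℝ := (S.ncard : ℝ)⁻¹ * setSum S f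

/-- The dilated triadic cube `r□_m = (-r 3^m/2, r 3^m/2)^d ∩ ℤ^d`. -/
def tcube (d : ℕ) (r : ℝ) (m : ℕ) : Set (V d) := {x | ∀ i, 2 * (|x i| : ℝ) < r * 3 ^ m}

/-- The edge `(x, y)` belongs to `E^a_d`: it is open and both endpoints lie on `C_∞`. -/
def openEdge {d : ℕ} (a : Env d) (x y : V d) : Prop :=
  x ∈ Cinfty a ∧ y ∈ Cinfty a ∧ opn a x y

/-- `u` has finite Dirichlet energy `⟨∇u, ∇u⟩_{C_∞} < ∞`. -/
def FiniteEnergy {d : ℕ} (a : Env d) (u : V d → ℝ) : Prop :=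
  Summable (fun pr : V d × V d => (grad a (Cinfty a) u pr.1 pr.2) ^ 2)

/-- The Dirichlet energy `⟨∇u, ∇u⟩_{C_∞}`. -/
def energy {d : ℕ} (a : Env d) (u : V d → ℝ) : ℝ :=
  ∑' pr : V d × V d, (grad a (Cinfty a) u pr.1 pr.2) ^ 2

/-- `w` is a weak solution of `-∇·(a∇w) = -∇·ξ` on `C_∞`: for every finite-energy `h`,
the pairings `⟨∇w, a∇h⟩_{C_∞}` and `⟨ξ, ∇h⟩_{C_∞}` converge absolutely and coincide. -/
def IsWeakSol {d : ℕ} (a : Env d) (ξ : V d → V d → ℝ) (w : V d → ℝ) : Prop :=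
  ∀ h : V d → ℝ, FiniteEnergy a h →
    Summable (fun pr : V d × V d =>
      |grad a (Cinfty a) w pr.1 pr.2 * aOf a pr.1 pr.2 * grad a (Cinfty a) h pr.1 pr.2|) ∧
    Summable (fun pr : V d × V d => |ξ pr.1 pr.2 * grad a (Cinfty a) h pr.1 pr.2|) ∧
    ∑' pr : V d × V d,
        grad a (Cinfty a) w pr.1 pr.2 * aOf a pr.1 pr.2 * grad a (Cinfty a) h pr.1 pr.2
      = ∑' pr : V d × V d, ξ pr.1 pr.2 * grad a (Cinfty a) h pr.1 pr.2

/-- `G` is a family of Green's functions: for every `e = (x,y) ∈ E^a_d`, the function `G x y`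
has bounded gradient, finite Dirichlet energy, and satisfies
`⟨∇G^e, a∇h⟩_{C_∞} = ∇h(e)` (with absolute convergence) for every finite-energy `h`. -/
def IsGreenFamily {d : ℕ} (a : Env d) (G : V d → V d → V d → ℝ) : Prop :=
  ∀ x y : V d, openEdge a x y →
    (∃ C : ℝ, ∀ x' y' : V d, openEdge a x' y' → |grad a (Cinfty a) (G x y) x' y'| ≤ C) ∧
    FiniteEnergy a (G x y) ∧
    (∀ h : V d → ℝ, FiniteEnergy a h →
      Summable (fun pr : V d × V d =>
        |grad a (Cinfty a) (G x y) pr.1 pr.2 * aOf a pr.1 pr.2 *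
          grad a (Cinfty a) h pr.1 pr.2|) ∧
      ∑' pr : V d × V d,
          grad a (Cinfty a) (G x y) pr.1 pr.2 * aOf a pr.1 pr.2 *
            grad a (Cinfty a) h pr.1 pr.2
        = h x - h y)

/-!
Write `S u := √a ∇u` and `g := ξ / √a`. Then `⟨∇u, a∇h⟩ = ⟪S u, S h⟫` and `⟨ξ, ∇h⟩ = ⟪g, S h⟫` in
`ℓ²(E_d)`, and since `λ ≤ a ≤ 1` on open edges, `u` has finite energy iff `S u ∈ ℓ²`. The space
`K := {S u}` is closed in `ℓ²`: a pointwise limit of gradients is again a gradient, because on the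
connected cluster `C_∞` a potential is recovered from its gradient by summing along open paths.

(a) The potential `w` of the orthogonal projection of `g` onto `K` is a weak solution.
(b) The difference `u` of two solutions satisfies `‖S u‖² = ⟨∇u, a∇u⟩ = 0`, so `∇u = 0` and `u` is constant on `C_∞`.
(c) Green's functions are symmetric, `∇G^e(e') = ⟨∇G^{e'}, a∇G^e⟩ = ∇G^{e'}(e)`, which turns the
series into `⟨ξ, ∇G^{e'}⟩ = ⟨∇w, a∇G^{e'}⟩ = ∇w(e')`.
-/

open Topology

section SquareSummable

variable {α : Type*}

lemma memℓp_two_iff_summable_sq {f : α → ℝ} : Memℓp f 2 ↔ Summable fun i => f i ^ 2 := by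
  rw [memℓp_gen_iff (by norm_num)]
  simp [sq_abs]

lemma real_inner_lp_eq_tsum (f g : lp (fun _ : α => ℝ) 2) : inner ℝ f g = ∑' i, f i * g i := by
  rw [lp.inner_eq_tsum]
  simp [mul_comm]

lemma summable_abs_mul_of_summable_sq {f g : α → ℝ} (hf : Summable fun i => f i ^ 2)
    (hg : Summable fun i => g i ^ 2) : Summable fun i => |f i * g i| := by
  refine ((hf.add hg).div_const 2).of_nonneg_of_le (fun _ => abs_nonneg _) fun i => ?_
  rw [abs_mul, le_div_iff₀ two_pos, ← sq_abs (f i), ← sq_abs (g i)]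
  nlinarith [two_mul_le_add_sq |f i| |g i|]

end SquareSummable

variable {d : ℕ}

section Lattice

lemma adj_symm {x y : V d} (h : adj x y) : adj y x := by
  simpa only [adj, abs_sub_comm] using h

lemma aOf_comm (a : Env d) (x y : V d) : aOf a x y = aOf a y x := by
  unfold aOf
  by_cases h : adj x y
  · rw [dif_pos h, dif_pos (adj_symm h)]
    exact congrArg a (Subtype.ext Sym2.eq_swap)
  · rw [dif_neg h, dif_neg (mt adj_symm h)]

lemma opn_symm {a : Env d} {x y : V d} (h : opn a x y) : opn a y x :=
  ⟨adj_symm h.1, aOf_comm a x y ▸ h.2⟩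

lemma conn_symm {a : Env d} {x y : V d} (h : conn a x y) : conn a y x := by
  induction h with
  | refl => exact .refl
  | tail _ hstep ih => exact .head (opn_symm hstep) ih

lemma mem_Cinfty_of_conn {a : Env d} {x y : V d} (hx : x ∈ Cinfty a) (h : conn a x y) :
    y ∈ Cinfty a :=
  hx.mono fun _ hz => (conn_symm h).trans hz

lemma HasUniqueInfiniteCluster.induction {a : Env d} (huniq : HasUniqueInfiniteCluster a)
    {x₀ : V d} (hx₀ : x₀ ∈ Cinfty a) {P : V d → Prop} (base : P x₀)
    (step : ∀ x y, openEdge a x y → P x → P y) {x : V d} (hx : x ∈ Cinfty a) : P x := by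
  have hconn := huniq.2 x₀ hx₀ x hx
  clear hx
  induction hconn with
  | refl => exact base
  | tail hconn hstep ih =>
    exact step _ _ ⟨mem_Cinfty_of_conn hx₀ hconn,
      mem_Cinfty_of_conn hx₀ (hconn.tail hstep), hstep⟩ ih

lemma aOf_mem_Icc {lam : ℝ} {a : Env d} (ha : EnvBounds lam a) {x y : V d} (h : opn a x y) :
    aOf a x y ∈ Set.Icc lam 1 := by
  have hne := h.2
  rw [aOf, dif_pos h.1] at hne ⊢
  exact (ha _).resolve_left hne

lemma sqrt_aOf_pos {lam : ℝ} (hlam : 0 < lam) {a : Env d} (ha : EnvBounds lam a) {x y : V d}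
    (h : opn a x y) : 0 < √(aOf a x y) :=
  Real.sqrt_pos.2 (hlam.trans_le (aOf_mem_Icc ha h).1)

end Lattice

section Gradient

variable {a : Env d}

lemma grad_of_openEdge (u : V d → ℝ) {x y : V d} (h : openEdge a x y) :
    grad a (Cinfty a) u x y = u x - u y :=
  if_pos h

lemma grad_of_not_openEdge (u : V d → ℝ) {x y : V d} (h : ¬ openEdge a x y) :
    grad a (Cinfty a) u x y = 0 :=
  if_neg h

lemma grad_add (C : Set (V d)) (u v : V d → ℝ) (x y : V d) :
    grad a C (u + v) x y = grad a C u x y + grad a C v x y := by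
  simp only [grad, Pi.add_apply]
  split_ifs <;> ring

lemma grad_smul (C : Set (V d)) (c : ℝ) (u : V d → ℝ) (x y : V d) :
    grad a C (c • u) x y = c * grad a C u x y := by
  simp only [grad, Pi.smul_apply, smul_eq_mul]
  split_ifs <;> ring

def weightedGrad (a : Env d) : (V d → ℝ) →ₗ[ℝ] V d × V d → ℝ where
  toFun u pr := √(aOf a pr.1 pr.2) * grad a (Cinfty a) u pr.1 pr.2
  map_add' u v := by
    ext pr
    simp only [grad_add, Pi.add_apply]
    ring
  map_smul' c u := by
    ext pr
    simp only [grad_smul, Pi.smul_apply, smul_eq_mul, RingHom.id_apply]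
    ring

lemma weightedGrad_apply (u : V d → ℝ) (pr : V d × V d) :
    weightedGrad a u pr = √(aOf a pr.1 pr.2) * grad a (Cinfty a) u pr.1 pr.2 :=
  rfl

variable {lam : ℝ} (hlam : 0 < lam) (ha : EnvBounds lam a)
include hlam ha

lemma weightedGrad_mul_weightedGrad (u v : V d → ℝ) (pr : V d × V d) :
    weightedGrad a u pr * weightedGrad a v pr
      = grad a (Cinfty a) u pr.1 pr.2 * aOf a pr.1 pr.2 * grad a (Cinfty a) v pr.1 pr.2 := by
  by_cases h : openEdge a pr.1 pr.2
  · rw [weightedGrad_apply, weightedGrad_apply, mul_mul_mul_comm,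
      Real.mul_self_sqrt (hlam.le.trans (aOf_mem_Icc ha h.2.2).1)]
    ring
  · simp [weightedGrad_apply, grad_of_not_openEdge _ h]

lemma sq_weightedGrad_mem_Icc (u : V d → ℝ) (pr : V d × V d) :
    weightedGrad a u pr ^ 2 ∈
      Set.Icc (lam * grad a (Cinfty a) u pr.1 pr.2 ^ 2) (grad a (Cinfty a) u pr.1 pr.2 ^ 2) := by
  rw [sq (weightedGrad a u pr), weightedGrad_mul_weightedGrad hlam ha]
  by_cases h : openEdge a pr.1 pr.2
  · obtain ⟨hlo, hhi⟩ := aOf_mem_Icc ha h.2.2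
    have := sq_nonneg (grad a (Cinfty a) u pr.1 pr.2)
    constructor <;> nlinarith
  · simp [grad_of_not_openEdge _ h]

lemma memℓp_weightedGrad_iff {u : V d → ℝ} : Memℓp (weightedGrad a u) 2 ↔ FiniteEnergy a u := by
  rw [memℓp_two_iff_summable_sq, FiniteEnergy]
  constructor
  · refine fun hS => (hS.div_const lam).of_nonneg_of_le (fun _ => sq_nonneg _) fun pr => ?_
    rw [le_div_iff₀ hlam, mul_comm]
    exact (sq_weightedGrad_mem_Icc hlam ha u pr).1
  · exact fun hu => hu.of_nonneg_of_le (fun _ => sq_nonneg _) fun pr =>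
      (sq_weightedGrad_mem_Icc hlam ha u pr).2

lemma summable_abs_grad_mul_aOf_mul_grad {u v : V d → ℝ} (hu : FiniteEnergy a u)
    (hv : FiniteEnergy a v) :
    Summable fun pr : V d × V d =>
      |grad a (Cinfty a) u pr.1 pr.2 * aOf a pr.1 pr.2 * grad a (Cinfty a) v pr.1 pr.2| := by
  simp_rw [← weightedGrad_mul_weightedGrad hlam ha]
  exact summable_abs_mul_of_summable_sq
    (memℓp_two_iff_summable_sq.1 ((memℓp_weightedGrad_iff hlam ha).2 hu))
    (memℓp_two_iff_summable_sq.1 ((memℓp_weightedGrad_iff hlam ha).2 hv))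

end Gradient

abbrev EdgeL2 (d : ℕ) : Type := lp (fun _ : V d × V d => ℝ) 2

def gradSubmodule (a : Env d) : Submodule ℝ (EdgeL2 d) where
  carrier := {f | ∃ u, ⇑f = weightedGrad a u}
  add_mem' := by
    rintro _ _ ⟨u, hu⟩ ⟨v, hv⟩
    exact ⟨u + v, by rw [lp.coeFn_add, hu, hv, map_add]⟩
  zero_mem' := ⟨0, by rw [lp.coeFn_zero, map_zero]⟩
  smul_mem' := by
    rintro c _ ⟨u, hu⟩
    exact ⟨c • u, by rw [lp.coeFn_smul, hu, map_smul]⟩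

lemma HasUniqueInfiniteCluster.exists_tendsto_grad {a : Env d}
    (huniq : HasUniqueInfiniteCluster a) {ι : Type*} {l : Filter ι} {h : ι → V d → ℝ}
    (hconv : ∀ x y, openEdge a x y → ∃ L, Tendsto (fun n => h n x - h n y) l (𝓝 L)) :
    ∃ w : V d → ℝ, ∀ x y, openEdge a x y →
      Tendsto (fun n => h n x - h n y) l (𝓝 (w x - w y)) := by
  obtain ⟨x₀, hx₀⟩ := huniq.1
  have hpot : ∀ x ∈ Cinfty a, ∃ L, Tendsto (fun n => h n x - h n x₀) l (𝓝 L) := by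
    refine fun x hx => huniq.induction (P := fun x => ∃ L, Tendsto (fun n => h n x - h n x₀) l (𝓝 L))
      hx₀ ⟨0, by simpa using tendsto_const_nhds⟩ ?_ hx
    rintro y z hyz ⟨L, hL⟩
    obtain ⟨L', hL'⟩ := hconv y z hyz
    exact ⟨L - L', by convert hL.sub hL' using 2; ring⟩
  choose! w hw using hpot
  exact ⟨w, fun x y hxy => by convert (hw x hxy.1).sub (hw y hxy.2.1) using 2; ring⟩

theorem isClosed_gradSubmodule {lam : ℝ} (hlam : 0 < lam) {a : Env d} (ha : EnvBounds lam a)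
    (huniq : HasUniqueInfiniteCluster a) : IsClosed (gradSubmodule a : Set (EdgeL2 d)) := by
  refine isClosed_of_closure_subset fun f hf => ?_
  obtain ⟨F, hFK, hFf⟩ := mem_closure_iff_seq_limit.1 hf
  choose h hh using hFK
  have hpt : ∀ pr, Tendsto (fun n => weightedGrad a (h n) pr) atTop (𝓝 (f pr)) := fun pr => by
    simpa [← hh, Function.comp_def] using ((lp.lipschitzWith_one_eval 2 pr).continuous.tendsto f).comp hFf
  obtain ⟨w, hw⟩ := huniq.exists_tendsto_grad (h := h) fun x y hxy => by
    refine ⟨f (x, y) / √(aOf a x y), ?_⟩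
    convert (hpt (x, y)).div_const (√(aOf a x y)) using 2 with n
    rw [weightedGrad_apply, grad_of_openEdge _ hxy, mul_div_cancel_left₀ _ (sqrt_aOf_pos hlam ha hxy.2.2).ne']
  refine ⟨w, funext fun pr => tendsto_nhds_unique (hpt pr) ?_⟩
  by_cases hpr : openEdge a pr.1 pr.2
  · simp_rw [weightedGrad_apply, grad_of_openEdge _ hpr]
    exact (hw _ _ hpr).const_mul _
  · simp_rw [weightedGrad_apply, grad_of_not_openEdge _ hpr, mul_zero]
    exact tendsto_const_nhds

section WeakSolution

variable {lam : ℝ} (hlam : 0 < lam) {a : Env d} (ha : EnvBounds lam a) {ξ : V d → V d → ℝ}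
include hlam ha

lemma isWeakSol_of_tsum_eq (hL2 : Summable fun pr : V d × V d => ξ pr.1 pr.2 ^ 2)
    {w : V d → ℝ} (hw : FiniteEnergy a w)
    (heq : ∀ h, FiniteEnergy a h →
      ∑' pr : V d × V d,
          grad a (Cinfty a) w pr.1 pr.2 * aOf a pr.1 pr.2 * grad a (Cinfty a) h pr.1 pr.2
        = ∑' pr : V d × V d, ξ pr.1 pr.2 * grad a (Cinfty a) h pr.1 pr.2) :
    IsWeakSol a ξ w := fun h hh =>
  ⟨summable_abs_grad_mul_aOf_mul_grad hlam ha hw hh, summable_abs_mul_of_summable_sq hL2 hh,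
    heq h hh⟩

lemma memℓp_div_sqrt_aOf (hsupp : ∀ x y, ¬ openEdge a x y → ξ x y = 0)
    (hL2 : Summable fun pr : V d × V d => ξ pr.1 pr.2 ^ 2) :
    Memℓp (fun pr : V d × V d => ξ pr.1 pr.2 / √(aOf a pr.1 pr.2)) 2 := by
  rw [memℓp_two_iff_summable_sq]
  refine (hL2.div_const lam).of_nonneg_of_le (fun _ => sq_nonneg _) fun pr => ?_
  by_cases h : openEdge a pr.1 pr.2
  · have hlo := (aOf_mem_Icc ha h.2.2).1
    rw [div_pow, Real.sq_sqrt (hlam.le.trans hlo)]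
    exact div_le_div_of_nonneg_left (sq_nonneg _) hlam hlo
  · simp [hsupp _ _ h]

theorem exists_isWeakSol (huniq : HasUniqueInfiniteCluster a)
    (hsupp : ∀ x y, ¬ openEdge a x y → ξ x y = 0)
    (hL2 : Summable fun pr : V d × V d => ξ pr.1 pr.2 ^ 2) :
    ∃ w : V d → ℝ, FiniteEnergy a w ∧ IsWeakSol a ξ w := by
  let g : EdgeL2 d := ⟨_, memℓp_div_sqrt_aOf hlam ha hsupp hL2⟩
  have hg : ∀ u pr, ξ pr.1 pr.2 * grad a (Cinfty a) u pr.1 pr.2 = g pr * weightedGrad a u pr := by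
    intro u pr
    by_cases hpr : openEdge a pr.1 pr.2
    · have := (sqrt_aOf_pos hlam ha hpr.2.2).ne'
      simp only [g, weightedGrad_apply]
      field_simp
    · simp [g, hsupp _ _ hpr]
  let K := gradSubmodule a
  have : CompleteSpace K := (isClosed_gradSubmodule hlam ha huniq).completeSpace_coe
  obtain ⟨w, hw⟩ := K.starProjection_apply_mem g
  have hwE : FiniteEnergy a w := (memℓp_weightedGrad_iff hlam ha).1 (hw ▸ (K.starProjection g).2)
  refine ⟨w, hwE, isWeakSol_of_tsum_eq hlam ha hL2 hwE fun h hh => ?_⟩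
  let Sh : EdgeL2 d := ⟨weightedGrad a h, (memℓp_weightedGrad_iff hlam ha).2 hh⟩
  have horth := K.starProjection_inner_eq_zero g Sh ⟨h, rfl⟩
  rw [inner_sub_left, sub_eq_zero, real_inner_lp_eq_tsum, real_inner_lp_eq_tsum, hw] at horth
  simp_rw [← weightedGrad_mul_weightedGrad hlam ha, hg]
  exact horth.symm

theorem IsWeakSol.sub_eq_sub (huniq : HasUniqueInfiniteCluster a) {w w' : V d → ℝ}
    (hw : FiniteEnergy a w) (hsol : IsWeakSol a ξ w) (hw' : FiniteEnergy a w')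
    (hsol' : IsWeakSol a ξ w') {x y : V d} (hx : x ∈ Cinfty a) (hy : y ∈ Cinfty a) :
    w x - w' x = w y - w' y := by
  have hu : FiniteEnergy a (w - w') := by
    rw [← memℓp_weightedGrad_iff hlam ha, map_sub]
    exact ((memℓp_weightedGrad_iff hlam ha).2 hw).sub ((memℓp_weightedGrad_iff hlam ha).2 hw')
  obtain ⟨hs, -, heq⟩ := hsol _ hu
  obtain ⟨hs', -, heq'⟩ := hsol' _ hu
  have henergy : HasSum (fun pr => weightedGrad a (w - w') pr ^ 2) 0 := by
    have hsplit : ∀ pr, weightedGrad a (w - w') pr ^ 2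
        = weightedGrad a w pr * weightedGrad a (w - w') pr - weightedGrad a w' pr * weightedGrad a (w - w') pr := by
      intro pr
      rw [← sub_mul, ← Pi.sub_apply, ← map_sub, sq]
    simp_rw [hsplit, weightedGrad_mul_weightedGrad hlam ha]
    have := hs.of_abs.hasSum.sub hs'.of_abs.hasSum
    rwa [heq, heq', sub_self] at this
  have hconst : ∀ b c, openEdge a b c → (w - w') b = (w - w') c := fun b c hbc => by
    have := congrFun ((hasSum_zero_iff_of_nonneg fun _ => sq_nonneg _).1 henergy) (b, c)
    simpa [weightedGrad_apply, grad_of_openEdge _ hbc, (sqrt_aOf_pos hlam ha hbc.2.2).ne', sub_eq_zero]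
      using this
  exact huniq.induction (P := fun z => (w - w') x = (w - w') z) hx rfl
    (fun b c hbc hb => hb.trans (hconst b c hbc)) hy

end WeakSolution

lemma IsGreenFamily.grad_comm {a : Env d} {G : V d → V d → V d → ℝ} (hG : IsGreenFamily a G)
    {x y x' y' : V d} (he : openEdge a x y) (he' : openEdge a x' y') :
    grad a (Cinfty a) (G x y) x' y' = grad a (Cinfty a) (G x' y') x y := by
  obtain ⟨-, hGE, hweak⟩ := hG x y he
  obtain ⟨-, hGE', hweak'⟩ := hG x' y' he'
  rw [grad_of_openEdge _ he', grad_of_openEdge _ he, ← (hweak (G x' y') hGE').2,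
    ← (hweak' (G x y) hGE).2]
  exact tsum_congr fun _ => by ring

theorem IsWeakSol.grad_eq_tsum_green {a : Env d} {ξ : V d → V d → ℝ}
    (hsupp : ∀ x y, ¬ openEdge a x y → ξ x y = 0) {G : V d → V d → V d → ℝ}
    (hG : IsGreenFamily a G) {w : V d → ℝ} (hw : FiniteEnergy a w) (hsol : IsWeakSol a ξ w)
    {x' y' : V d} (he' : openEdge a x' y') :
    Summable (fun pr : V d × V d => |ξ pr.1 pr.2 * grad a (Cinfty a) (G pr.1 pr.2) x' y'|) ∧
      ∑' pr : V d × V d, ξ pr.1 pr.2 * grad a (Cinfty a) (G pr.1 pr.2) x' y'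
        = grad a (Cinfty a) w x' y' := by
  have hsymm : ∀ pr : V d × V d, ξ pr.1 pr.2 * grad a (Cinfty a) (G pr.1 pr.2) x' y'
      = ξ pr.1 pr.2 * grad a (Cinfty a) (G x' y') pr.1 pr.2 := by
    intro pr
    by_cases he : openEdge a pr.1 pr.2
    · rw [hG.grad_comm he he']
    · rw [hsupp _ _ he, zero_mul, zero_mul]
  obtain ⟨-, hGE, hweak⟩ := hG x' y' he'
  obtain ⟨-, hsum, heq⟩ := hsol (G x' y') hGE
  simp_rw [hsymm]
  refine ⟨hsum, ?_⟩
  rw [← heq, grad_of_openEdge _ he', ← (hweak w hw).2]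
  exact tsum_congr fun _ => by ring

theorem statement5_general (d : ℕ) (lam : ℝ) (hlam0 : 0 < lam)
    (a : Env d) (ha : EnvBounds lam a) (huniq : HasUniqueInfiniteCluster a)
    (ξ : V d → V d → ℝ)
    (hsupp : ∀ x y, ¬ openEdge a x y → ξ x y = 0)
    (hL2 : Summable fun pr : V d × V d => (ξ pr.1 pr.2) ^ 2) :
    (∃ w : V d → ℝ, FiniteEnergy a w ∧ IsWeakSol a ξ w) ∧
    (∀ w w' : V d → ℝ, FiniteEnergy a w → IsWeakSol a ξ w →
      FiniteEnergy a w' → IsWeakSol a ξ w' →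
      ∀ x ∈ Cinfty a, ∀ y ∈ Cinfty a, w x - w' x = w y - w' y) ∧
    (∀ G : V d → V d → V d → ℝ, IsGreenFamily a G →
      ∀ w : V d → ℝ, FiniteEnergy a w → IsWeakSol a ξ w →
        ∀ x' y' : V d, openEdge a x' y' →
          Summable (fun pr : V d × V d =>
            |ξ pr.1 pr.2 * grad a (Cinfty a) (G pr.1 pr.2) x' y'|) ∧
          ∑' pr : V d × V d, ξ pr.1 pr.2 * grad a (Cinfty a) (G pr.1 pr.2) x' y'
            = grad a (Cinfty a) w x' y') :=
  ⟨exists_isWeakSol hlam0 ha huniq hsupp hL2,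
    fun _ _ hw hsol hw' hsol' _ hx _ hy => hsol.sub_eq_sub hlam0 ha huniq hw hw' hsol' hx hy,
    fun _ hG _ hw hsol _ _ he' => hsol.grad_eq_tsum_green hsupp hG hw he'⟩

/-- Poisson equation with divergence-form source on the infinite cluster.
For square-summable antisymmetric `ξ` supported on the open edges of `C_∞`:
(a) there is a finite-energy weak solution `w` of `-∇·(a∇w) = -∇·ξ` on `C_∞`;
(b) the solution is unique up to an additive constant;
(c) for any family of Green's functions, `∇w(e') = Σ_e ξ(e) ∇G^e(e')` with absolute
convergence. -/
theorem statement5 (d : ℕ) (hd : 2 ≤ d) (lam : ℝ) (hlam0 : 0 < lam) (hlam1 : lam ≤ 1)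
    (a : Env d) (ha : EnvBounds lam a) (huniq : HasUniqueInfiniteCluster a)
    (ξ : V d → V d → ℝ) (hanti : ∀ x y, ξ x y = -ξ y x)
    (hsupp : ∀ x y, ¬ openEdge a x y → ξ x y = 0)
    (hL2 : Summable fun pr : V d × V d => (ξ pr.1 pr.2) ^ 2) :
    (∃ w : V d → ℝ, FiniteEnergy a w ∧ IsWeakSol a ξ w) ∧
    (∀ w w' : V d → ℝ, FiniteEnergy a w → IsWeakSol a ξ w →
      FiniteEnergy a w' → IsWeakSol a ξ w' →
      ∀ x ∈ Cinfty a, ∀ y ∈ Cinfty a, w x - w' x = w y - w' y) ∧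
    (∀ G : V d → V d → V d → ℝ, IsGreenFamily a G →
      ∀ w : V d → ℝ, FiniteEnergy a w → IsWeakSol a ξ w →
        ∀ x' y' : V d, openEdge a x' y' →
          Summable (fun pr : V d × V d =>
            |ξ pr.1 pr.2 * grad a (Cinfty a) (G pr.1 pr.2) x' y'|) ∧
          ∑' pr : V d × V d, ξ pr.1 pr.2 * grad a (Cinfty a) (G pr.1 pr.2) x' y'
            = grad a (Cinfty a) w x' y') :=
  statement5_general d lam hlam0 a ha huniq ξ hsupp hL2

end Perco
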